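/- Let M be a closed Riemannian Einstein 4-manifold admitting a parallel isometric paracomplex structure. Then the signature τ(M) = 0. -/
import Mathlib


open Finset Matrix MeasureTheory

/-- Kronecker delta on `Fin 4`. -/
def kdelta (i j : Fin 4) : ℝ := if i = j then 1 else 0

/-- The Levi-Civita alternating symbol `ε_{ijkl}` on `Fin 4`. -/
def eps4 (i j k l : Fin 4) : ℝ :=
  (∑ σ : Equiv.Perm (Fin 4),
    if σ 0 = i ∧ σ 1 = j ∧ σ 2 = k ∧ σ 3 = l then ((Equiv.Perm.sign σ : ℤ) : ℝ) else 0)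

variable {M : Type*}

/-- Ricci contraction of an (orthonormal-frame) curvature tensor field. -/
def ricciOf (R : M → Fin 4 → Fin 4 → Fin 4 → Fin 4 → ℝ) (x : M) (i j : Fin 4) : ℝ :=
  ∑ k, R x i k j k

/-- Scalar curvature. -/
def scalarOf (R : M → Fin 4 → Fin 4 → Fin 4 → Fin 4 → ℝ) (x : M) : ℝ :=
  ∑ i, ricciOf R x i i

/-- The Weyl tensor of `R` in an orthonormal frame (dimension 4). -/
noncomputable def weylOf (R : M → Fin 4 → Fin 4 → Fin 4 → Fin 4 → ℝ) (x : M) (a b c d : Fin 4) : ℝ :=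
  R x a b c d
    - (1 / 2) * (kdelta a c * ricciOf R x b d - kdelta a d * ricciOf R x b c
      - kdelta b c * ricciOf R x a d + kdelta b d * ricciOf R x a c)
    + (scalarOf R x / 6) * (kdelta a c * kdelta b d - kdelta a d * kdelta b c)

/-- Hodge star on the first index pair of a curvature-type tensor. -/
noncomputable def hodgeFst (W : M → Fin 4 → Fin 4 → Fin 4 → Fin 4 → ℝ) (x : M) (a b c d : Fin 4) : ℝ :=
  (1 / 2) * ∑ m, ∑ n, eps4 a b m n * W x m n c d

/-- Squared norm of the self-dual (`s = 1`) or anti-self-dual (`s = −1`) part of the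
Weyl tensor. -/
noncomputable def weylPartNormSq (R : M → Fin 4 → Fin 4 → Fin 4 → Fin 4 → ℝ) (s : ℝ) (x : M) : ℝ :=
  ∑ a, ∑ b, ∑ c, ∑ d,
    ((weylOf R x a b c d + s * hodgeFst (weylOf R) x a b c d) / 2) ^ 2

/-- The curvature operator `R(e_a, e_b)` as a matrix. -/
def curvOp (R : M → Fin 4 → Fin 4 → Fin 4 → Fin 4 → ℝ) (x : M) (a b : Fin 4) :
    Matrix (Fin 4) (Fin 4) ℝ :=
  Matrix.of fun k l => R x a b k l



section Helpers
variable {α β γ δ ε ζ : Type*} [Fintype α] [Fintype β] [Fintype γ] [Fintype δ] [Fintype ε] [Fintype ζ]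
lemma mv12 (f : α → β → γ → ℝ) : ∑ x, ∑ a, ∑ b, f x a b = ∑ a, ∑ b, ∑ x, f x a b :=
  Finset.sum_comm.trans (Finset.sum_congr rfl fun _ _ => Finset.sum_comm)
lemma mv13 (f : α → β → γ → δ → ℝ) :
    ∑ x, ∑ a, ∑ b, ∑ c, f x a b c = ∑ a, ∑ b, ∑ c, ∑ x, f x a b c :=
  Finset.sum_comm.trans (Finset.sum_congr rfl fun _ _ => mv12 _)
lemma mv14 (f : α → β → γ → δ → ε → ℝ) :
    ∑ x, ∑ a, ∑ b, ∑ c, ∑ d, f x a b c d = ∑ a, ∑ b, ∑ c, ∑ d, ∑ x, f x a b c d :=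
  Finset.sum_comm.trans (Finset.sum_congr rfl fun _ _ => mv13 _)
lemma mv24 (f : α → ζ → β → γ → δ → ε → ℝ) :
    ∑ x, ∑ y, ∑ a, ∑ b, ∑ c, ∑ d, f x y a b c d
      = ∑ a, ∑ b, ∑ c, ∑ d, ∑ x, ∑ y, f x y a b c d :=
  (Finset.sum_congr rfl fun _ _ => mv14 _).trans (mv14 _)
lemma mv22 (f : α → ζ → β → γ → ℝ) :
    ∑ x, ∑ y, ∑ a, ∑ b, f x y a b = ∑ a, ∑ b, ∑ x, ∑ y, f x y a b :=
  (Finset.sum_congr rfl fun _ _ => mv12 _).trans (mv12 _)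
lemma mv44 (f : α → α → α → α → β → β → β → β → ℝ) :
    ∑ x, ∑ y, ∑ z, ∑ w, ∑ a, ∑ b, ∑ c, ∑ d, f x y z w a b c d
      = ∑ a, ∑ b, ∑ c, ∑ d, ∑ x, ∑ y, ∑ z, ∑ w, f x y z w a b c d :=
  (Finset.sum_congr rfl fun _ _ => Finset.sum_congr rfl fun _ _ => mv24 _).trans (mv24 _)
end Helpers

def Mof (A : Fin 4 → Fin 4 → Fin 4 → Fin 4 → ℝ) (a b : Fin 4) : Matrix (Fin 4) (Fin 4) ℝ :=
  Matrix.of fun k l => A a b k l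

lemma entry3 (X S Y : Matrix (Fin 4) (Fin 4) ℝ) (u v : Fin 4) :
    (X * S * Y) u v = ∑ k, ∑ l, X u k * S k l * Y l v := by
  rw [Matrix.mul_apply]
  simp_rw [Matrix.mul_apply, Finset.sum_mul]
  rw [Finset.sum_comm]

lemma eps_contract (u v w z : Fin 4 → ℝ) :
    ∑ a, ∑ b, ∑ m, ∑ n, eps4 a b m n * (u a * v b * w m * z n)
      = (Matrix.of fun r s => ![u, v, w, z] s r).det := by
  unfold eps4
  simp_rw [Finset.sum_mul]
  rw [← mv14]
  rw [Matrix.det_apply]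
  refine Finset.sum_congr rfl fun σ _ => ?_
  simp only [ite_and, ite_mul, zero_mul, Finset.sum_ite_eq, Finset.mem_univ, if_true]
  simp [Fin.prod_univ_four, Units.smul_def, zsmul_eq_mul]


lemma sel_det_zero (B : Matrix (Fin 4) (Fin 4) ℝ) (hB : B.det = 0) (v : Fin 4 → Fin 4) :
    (Matrix.of fun r s => B r (v s)).det = 0 := by
  have h : (Matrix.of fun r s => B r (v s))
      = B * (Matrix.of fun r s => if r = v s then 1 else 0) := by
    ext r s
    simp [Matrix.mul_apply]
  rw [h, Matrix.det_mul, hB, zero_mul]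

lemma eps_contract_col (B : Matrix (Fin 4) (Fin 4) ℝ) (hB : B.det = 0) (i j k l : Fin 4) :
    ∑ a, ∑ b, ∑ m, ∑ n, eps4 a b m n * (B a i * B b j * (B m k * B n l)) = 0 := by
  have h := eps_contract (fun a => B a i) (fun b => B b j) (fun m => B m k) (fun n => B n l)
  have h2 : (Matrix.of fun r s => ![fun a => B a i, fun b => B b j,
      fun m => B m k, fun n => B n l] s r) = Matrix.of fun r s => B r (![i, j, k, l] s) := by
    ext r s
    fin_cases s <;> simp
  calc ∑ a, ∑ b, ∑ m, ∑ n, eps4 a b m n * (B a i * B b j * (B m k * B n l))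
      = ∑ a, ∑ b, ∑ m, ∑ n, eps4 a b m n * ((fun a => B a i) a * (fun b => B b j) b
          * (fun m => B m k) m * (fun n => B n l) n) := by
        refine Finset.sum_congr rfl fun a _ => Finset.sum_congr rfl fun b _ =>
          Finset.sum_congr rfl fun m _ => Finset.sum_congr rfl fun n _ => ?_
        ring
    _ = 0 := by rw [h, h2, sel_det_zero B hB]




lemma eps4_abab (a b : Fin 4) : eps4 a b a b = 0 := by
  refine Finset.sum_eq_zero fun σ _ => ?_
  rw [if_neg]
  rintro ⟨h0, h1, h2, h3⟩
  have := σ.injective (h0.trans h2.symm)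
  simp at this

lemma eps4_abba (a b : Fin 4) : eps4 a b b a = 0 := by
  refine Finset.sum_eq_zero fun σ _ => ?_
  rw [if_neg]
  rintro ⟨h0, h1, h2, h3⟩
  have := σ.injective (h0.trans h3.symm)
  simp at this

lemma hcol (a b c d : Fin 4) :
    ∑ m, ∑ n, eps4 a b m n * (kdelta m c * kdelta n d - kdelta m d * kdelta n c)
      = eps4 a b c d - eps4 a b d c := by
  simp_rw [mul_sub, Finset.sum_sub_distrib]
  congr 1
  · simp [kdelta, mul_ite, ite_mul, mul_one, mul_zero, one_mul, zero_mul,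
      Finset.sum_ite_eq', Finset.mem_univ]
  · simp [kdelta, mul_ite, ite_mul, mul_one, mul_zero, one_mul, zero_mul,
      Finset.sum_ite_eq', Finset.mem_univ]

lemma LGG : ∑ a, ∑ b, ∑ c, ∑ d, ((kdelta a c * kdelta b d - kdelta a d * kdelta b c) *
    ∑ m, ∑ n, eps4 a b m n * (kdelta m c * kdelta n d - kdelta m d * kdelta n c)) = 0 := by
  simp_rw [hcol]
  simp [kdelta, sub_mul, mul_sub, ite_mul, one_mul, zero_mul, mul_ite, mul_zero, mul_one,
    Finset.sum_sub_distrib, Finset.sum_ite_eq, Finset.mem_univ, eps4_abab, eps4_abba]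

section Core

variable (A : Fin 4 → Fin 4 → Fin 4 → Fin 4 → ℝ) (P Q : Matrix (Fin 4) (Fin 4) ℝ)

-- mixed vanishing
lemma mix1 (hApair : ∀ a b c d, A a b c d = A c d a b)
    (hQs : ∀ u v, Q u v = Q v u)
    (hPMQ : ∀ a b, P * Mof A a b * Q = 0) :
    ∀ u v s t, ∑ i, ∑ k, P u i * Q v k * A i k s t = 0 := by
  intro u v s t
  have h : ∑ i, ∑ k, P u i * Q v k * A i k s t = (P * Mof A s t * Q) u v := by
    rw [entry3]
    refine Finset.sum_congr rfl fun i _ => Finset.sum_congr rfl fun k _ => ?_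
    have h1 : A i k s t = A s t i k := hApair i k s t
    have h2 : (Mof A s t) i k = A s t i k := rfl
    rw [h1, hQs v k, ← h2]; ring
  rw [h, hPMQ, Matrix.zero_apply]
lemma orth_of (X Y : Matrix (Fin 4) (Fin 4) ℝ) (h : X * Yᵀ = 0) :
    ∑ c, ∑ d, X c d * Y c d = 0 := by
  have : ∑ c, ∑ d, X c d * Y c d = (X * Yᵀ).trace := by
    simp [Matrix.trace, Matrix.diag, Matrix.mul_apply, Matrix.transpose_apply]
  rw [this, h, Matrix.trace_zero]

lemma mix2 (hApair : ∀ a b c d, A a b c d = A c d a b)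
    (hPs : ∀ u v, P u v = P v u)
    (hQMP : ∀ a b, Q * Mof A a b * P = 0) :
    ∀ u v s t, ∑ i, ∑ k, Q u i * P v k * A i k s t = 0 := by
  intro u v s t
  have h : ∑ i, ∑ k, Q u i * P v k * A i k s t = (Q * Mof A s t * P) u v := by
    rw [entry3]
    refine Finset.sum_congr rfl fun i _ => Finset.sum_congr rfl fun k _ => ?_
    have h1 : A i k s t = A s t i k := hApair i k s t
    have h2 : (Mof A s t) i k = A s t i k := rfl
    rw [h1, hPs v k, ← h2]; ring
  rw [h, hQMP, Matrix.zero_apply]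

lemma ppqq (hApair : ∀ a b c d, A a b c d = A c d a b)
    (hAb : ∀ a b c d, A a b c d + A a c d b + A a d b c = 0)
    (hPs : ∀ u v, P u v = P v u) (hQs : ∀ u v, Q u v = Q v u)
    (hPMQ : ∀ a b, P * Mof A a b * Q = 0) :
    ∀ a b c d, ∑ i, ∑ j, P a i * P b j * ((Q * Mof A i j * Q) c d) = 0 := by
  intro a b c d
  have hAb' : ∀ i j k l, A i j k l = -A i k l j - A i l j k := by
    intro i j k l; have := hAb i j k l; linarith
  have hM : ∀ i j k l, (Mof A i j) k l = A i j k l := fun _ _ _ _ => rfl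
  simp_rw [entry3, Finset.mul_sum, hM]
  have step : ∀ i j k l, P a i * P b j * (Q c k * A i j k l * Q l d)
      = -(P a i * P b j * (Q c k * A i k l j * Q l d))
        - (P a i * P b j * (Q c k * A i l j k * Q l d)) := by
    intro i j k l; rw [hAb' i j k l]; ring
  simp_rw [step, Finset.sum_sub_distrib, Finset.sum_neg_distrib]
  have T1 : ∑ i, ∑ j, ∑ k, ∑ l, P a i * P b j * (Q c k * A i k l j * Q l d) = 0 := by
    rw [mv13]
    refine Finset.sum_eq_zero fun j _ => ?_
    rw [mv12]
    refine Finset.sum_eq_zero fun l _ => ?_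
    have : ∑ i, ∑ k, P a i * P b j * (Q c k * A i k l j * Q l d)
        = (P b j * Q l d) * ∑ i, ∑ k, P a i * Q c k * A i k l j := by
      rw [Finset.mul_sum]
      refine Finset.sum_congr rfl fun i _ => ?_
      rw [Finset.mul_sum]
      exact Finset.sum_congr rfl fun k _ => by ring
    rw [this, mix1 A P Q hApair hQs hPMQ, mul_zero]
  have T2 : ∑ i, ∑ j, ∑ k, ∑ l, P a i * P b j * (Q c k * A i l j k * Q l d) = 0 := by
    rw [mv12]
    refine Finset.sum_eq_zero fun j _ => ?_
    refine Finset.sum_eq_zero fun k _ => ?_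
    have : ∑ i, ∑ l, P a i * P b j * (Q c k * A i l j k * Q l d)
        = (P b j * Q c k) * ∑ i, ∑ l, P a i * Q d l * A i l j k := by
      rw [Finset.mul_sum]
      refine Finset.sum_congr rfl fun i _ => ?_
      rw [Finset.mul_sum]
      refine Finset.sum_congr rfl fun l _ => ?_
      rw [hQs d l]; ring
    rw [this, mix1 A P Q hApair hQs hPMQ, mul_zero]
  rw [T1, T2]; ring

lemma qqpp (hApair : ∀ a b c d, A a b c d = A c d a b)
    (hAb : ∀ a b c d, A a b c d + A a c d b + A a d b c = 0)
    (hPs : ∀ u v, P u v = P v u) (hQs : ∀ u v, Q u v = Q v u)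
    (hQMP : ∀ a b, Q * Mof A a b * P = 0) :
    ∀ a b c d, ∑ i, ∑ j, Q a i * Q b j * ((P * Mof A i j * P) c d) = 0 := by
  intro a b c d
  have hAb' : ∀ i j k l, A i j k l = -A i k l j - A i l j k := by
    intro i j k l; have := hAb i j k l; linarith
  have hM : ∀ i j k l, (Mof A i j) k l = A i j k l := fun _ _ _ _ => rfl
  simp_rw [entry3, Finset.mul_sum, hM]
  have T1 : ∑ i, ∑ j, ∑ k, ∑ l, Q a i * Q b j * (P c k * A i k l j * P l d) = 0 := by
    rw [mv13]
    refine Finset.sum_eq_zero fun j _ => ?_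
    rw [mv12]
    refine Finset.sum_eq_zero fun l _ => ?_
    have : ∑ i, ∑ k, Q a i * Q b j * (P c k * A i k l j * P l d)
        = (Q b j * P l d) * ∑ i, ∑ k, Q a i * P c k * A i k l j := by
      rw [Finset.mul_sum]
      refine Finset.sum_congr rfl fun i _ => ?_
      rw [Finset.mul_sum]
      exact Finset.sum_congr rfl fun k _ => by ring
    rw [this, mix2 A P Q hApair hPs hQMP, mul_zero]
  have T2 : ∑ i, ∑ j, ∑ k, ∑ l, Q a i * Q b j * (P c k * A i l j k * P l d) = 0 := by
    rw [mv12]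
    refine Finset.sum_eq_zero fun j _ => ?_
    refine Finset.sum_eq_zero fun k _ => ?_
    have : ∑ i, ∑ l, Q a i * Q b j * (P c k * A i l j k * P l d)
        = (Q b j * P c k) * ∑ i, ∑ l, Q a i * P d l * A i l j k := by
      rw [Finset.mul_sum]
      refine Finset.sum_congr rfl fun i _ => ?_
      rw [Finset.mul_sum]
      refine Finset.sum_congr rfl fun l _ => ?_
      rw [hPs d l]; ring
    rw [this, mix2 A P Q hApair hPs hQMP, mul_zero]
  have step : ∀ i j k l, Q a i * Q b j * (P c k * A i j k l * P l d)
      = -(Q a i * Q b j * (P c k * A i k l j * P l d))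
        - (Q a i * Q b j * (P c k * A i l j k * P l d)) := by
    intro i j k l; rw [hAb' i j k l]; ring
  simp_rw [step, Finset.sum_sub_distrib, Finset.sum_neg_distrib]
  rw [T1, T2]; ring

lemma fullsplit (hApair : ∀ a b c d, A a b c d = A c d a b)
    (hAb : ∀ a b c d, A a b c d + A a c d b + A a d b c = 0)
    (hPs : ∀ u v, P u v = P v u) (hQs : ∀ u v, Q u v = Q v u)
    (h2 : ∀ a b, Mof A a b = P * Mof A a b * P + Q * Mof A a b * Q)
    (hPMQ : ∀ a b, P * Mof A a b * Q = 0)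
    (hQMP : ∀ a b, Q * Mof A a b * P = 0) :
    ∀ a b c d, A a b c d
      = (∑ i, ∑ j, P a i * P b j * ((P * Mof A i j * P) c d))
        + ∑ i, ∑ j, Q a i * Q b j * ((Q * Mof A i j * Q) c d) := by
  intro a b c d
  have e1 : A a b c d = (P * Mof A c d * P) a b + (Q * Mof A c d * Q) a b := by
    have h0 : A a b c d = (Mof A c d) a b := hApair a b c d
    rw [h0]
    conv_lhs => rw [h2 c d]
    rw [Matrix.add_apply]
  have e2 : (P * Mof A c d * P) a b
      = (∑ i, ∑ j, P a i * P b j * ((P * Mof A i j * P) c d))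
        + ∑ i, ∑ j, P a i * P b j * ((Q * Mof A i j * Q) c d) := by
    rw [entry3]
    have e3 : ∀ i j, P a i * (Mof A c d) i j * P j b
        = P a i * P b j * ((P * Mof A i j * P) c d)
          + P a i * P b j * ((Q * Mof A i j * Q) c d) := by
      intro i j
      have hx : (Mof A c d) i j = A i j c d := hApair c d i j
      have hy : A i j c d = (P * Mof A i j * P) c d + (Q * Mof A i j * Q) c d := by
        have : A i j c d = (Mof A i j) c d := rfl
        rw [this]
        conv_lhs => rw [h2 i j]
        rw [Matrix.add_apply]
      rw [hx, hy, hPs j b]; ring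
    simp_rw [e3, Finset.sum_add_distrib]
  have e4 : (Q * Mof A c d * Q) a b
      = (∑ i, ∑ j, Q a i * Q b j * ((P * Mof A i j * P) c d))
        + ∑ i, ∑ j, Q a i * Q b j * ((Q * Mof A i j * Q) c d) := by
    rw [entry3]
    have e3 : ∀ i j, Q a i * (Mof A c d) i j * Q j b
        = Q a i * Q b j * ((P * Mof A i j * P) c d)
          + Q a i * Q b j * ((Q * Mof A i j * Q) c d) := by
      intro i j
      have hx : (Mof A c d) i j = A i j c d := hApair c d i j
      have hy : A i j c d = (P * Mof A i j * P) c d + (Q * Mof A i j * Q) c d := by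
        have : A i j c d = (Mof A i j) c d := rfl
        rw [this]
        conv_lhs => rw [h2 i j]
        rw [Matrix.add_apply]
      rw [hx, hy, hQs j b]; ring
    simp_rw [e3, Finset.sum_add_distrib]
  rw [e1, e2, e4, ppqq A P Q hApair hAb hPs hQs hPMQ,
    qqpp A P Q hApair hAb hPs hQs hQMP]
  ring

lemma orthPQ (hPQ : P * Q = 0) (hQt : Qᵀ = Q) (S T : Matrix (Fin 4) (Fin 4) ℝ) :
    ∑ c, ∑ d, (P * S * P) c d * (Q * T * Q) c d = 0 := by
  apply orth_of
  have h1 : (Q * T * Q)ᵀ = Q * (Tᵀ * Q) := by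
    rw [Matrix.transpose_mul, Matrix.transpose_mul, hQt]
  rw [h1, show P * S * P * (Q * (Tᵀ * Q)) = P * S * (P * Q) * (Tᵀ * Q) by
    simp only [Matrix.mul_assoc], hPQ, Matrix.mul_zero, Matrix.zero_mul]

lemma crossCD (hPQ : P * Q = 0) (hQt : Qᵀ = Q) :
    ∀ a b m n : Fin 4,
      ∑ c, ∑ d, (∑ i, ∑ j, P a i * P b j * ((P * Mof A i j * P) c d))
        * (∑ k, ∑ l, Q m k * Q n l * ((Q * Mof A k l * Q) c d)) = 0 := by
  intro a b m n
  simp_rw [Finset.sum_mul, Finset.mul_sum]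
  rw [mv24]
  refine Finset.sum_eq_zero fun i _ => Finset.sum_eq_zero fun j _ =>
    Finset.sum_eq_zero fun k _ => Finset.sum_eq_zero fun l _ => ?_
  have h : ∑ c, ∑ d, P a i * P b j * ((P * Mof A i j * P) c d)
        * (Q m k * Q n l * ((Q * Mof A k l * Q) c d))
      = (P a i * P b j * (Q m k * Q n l))
        * ∑ c, ∑ d, (P * Mof A i j * P) c d * (Q * Mof A k l * Q) c d := by
    rw [Finset.mul_sum]
    refine Finset.sum_congr rfl fun c _ => ?_
    rw [Finset.mul_sum]
    exact Finset.sum_congr rfl fun d _ => by ring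
  rw [h, orthPQ P Q hPQ hQt, mul_zero]

lemma crossCD' (hQP : Q * P = 0) (hPt : Pᵀ = P) :
    ∀ a b m n : Fin 4,
      ∑ c, ∑ d, (∑ i, ∑ j, Q a i * Q b j * ((Q * Mof A i j * Q) c d))
        * (∑ k, ∑ l, P m k * P n l * ((P * Mof A k l * P) c d)) = 0 := by
  intro a b m n
  simp_rw [Finset.sum_mul, Finset.mul_sum]
  rw [mv24]
  refine Finset.sum_eq_zero fun i _ => Finset.sum_eq_zero fun j _ =>
    Finset.sum_eq_zero fun k _ => Finset.sum_eq_zero fun l _ => ?_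
  have h : ∑ c, ∑ d, Q a i * Q b j * ((Q * Mof A i j * Q) c d)
        * (P m k * P n l * ((P * Mof A k l * P) c d))
      = (Q a i * Q b j * (P m k * P n l))
        * ∑ c, ∑ d, (Q * Mof A i j * Q) c d * (P * Mof A k l * P) c d := by
    rw [Finset.mul_sum]
    refine Finset.sum_congr rfl fun c _ => ?_
    rw [Finset.mul_sum]
    exact Finset.sum_congr rfl fun d _ => by ring
  rw [h, orthPQ Q P hQP hPt, mul_zero]

lemma pieceSame (B : Matrix (Fin 4) (Fin 4) ℝ) (hdB : B.det = 0)
    (F : Fin 4 → Fin 4 → Matrix (Fin 4) (Fin 4) ℝ) :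
    ∑ a, ∑ b, ∑ m, ∑ n, eps4 a b m n *
      (∑ c, ∑ d, (∑ i, ∑ j, B a i * B b j * ((F i j) c d))
        * (∑ k, ∑ l, B m k * B n l * ((F k l) c d))) = 0 := by
  have inner : ∀ a b m n : Fin 4,
      (∑ c, ∑ d, (∑ i, ∑ j, B a i * B b j * ((F i j) c d))
        * (∑ k, ∑ l, B m k * B n l * ((F k l) c d)))
      = ∑ i, ∑ j, ∑ k, ∑ l, (B a i * B b j * (B m k * B n l))
          * (∑ c, ∑ d, (F i j) c d * (F k l) c d) := by
    intro a b m n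
    simp_rw [Finset.sum_mul, Finset.mul_sum]
    rw [mv24]
    refine Finset.sum_congr rfl fun i _ => Finset.sum_congr rfl fun j _ =>
      Finset.sum_congr rfl fun k _ => Finset.sum_congr rfl fun l _ => ?_
    exact Finset.sum_congr rfl fun c _ => Finset.sum_congr rfl fun d _ => by ring
  simp_rw [inner, Finset.mul_sum]
  rw [mv44]
  refine Finset.sum_eq_zero fun i _ => Finset.sum_eq_zero fun j _ =>
    Finset.sum_eq_zero fun k _ => Finset.sum_eq_zero fun l _ => ?_
  have h : ∑ a, ∑ b, ∑ m, ∑ n, ∑ c, ∑ d, eps4 a b m n *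
        (B a i * B b j * (B m k * B n l) * ((F i j) c d * (F k l) c d))
      = (∑ a, ∑ b, ∑ m, ∑ n, eps4 a b m n * (B a i * B b j * (B m k * B n l)))
        * (∑ c, ∑ d, (F i j) c d * (F k l) c d) := by
    simp_rw [Finset.sum_mul, Finset.mul_sum]
    refine Finset.sum_congr rfl fun a _ => Finset.sum_congr rfl fun b _ =>
      Finset.sum_congr rfl fun m _ => Finset.sum_congr rfl fun n _ =>
      Finset.sum_congr rfl fun c _ => Finset.sum_congr rfl fun d _ => by ring
  rw [h, eps_contract_col B hdB, zero_mul]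

lemma Ekey_zero (hApair : ∀ a b c d, A a b c d = A c d a b)
    (hAb : ∀ a b c d, A a b c d + A a c d b + A a d b c = 0)
    (hPs : ∀ u v, P u v = P v u) (hQs : ∀ u v, Q u v = Q v u)
    (h2 : ∀ a b, Mof A a b = P * Mof A a b * P + Q * Mof A a b * Q)
    (hPMQ : ∀ a b, P * Mof A a b * Q = 0)
    (hQMP : ∀ a b, Q * Mof A a b * P = 0)
    (hPQ : P * Q = 0) (hQP : Q * P = 0)
    (hPt : Pᵀ = P) (hQt : Qᵀ = Q)
    (hdP : P.det = 0) (hdQ : Q.det = 0) :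
    ∑ a, ∑ b, ∑ c, ∑ d, (A a b c d * ∑ m, ∑ n, eps4 a b m n * A m n c d) = 0 := by
  have hfs := fullsplit A P Q hApair hAb hPs hQs h2 hPMQ hQMP
  have stepA : ∑ a, ∑ b, ∑ c, ∑ d, (A a b c d * ∑ m, ∑ n, eps4 a b m n * A m n c d)
      = ∑ a, ∑ b, ∑ m, ∑ n, eps4 a b m n * (∑ c, ∑ d, A a b c d * A m n c d) := by
    refine Finset.sum_congr rfl fun a _ => Finset.sum_congr rfl fun b _ => ?_
    calc ∑ c, ∑ d, A a b c d * ∑ m, ∑ n, eps4 a b m n * A m n c d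
        = ∑ c, ∑ d, ∑ m, ∑ n, A a b c d * (eps4 a b m n * A m n c d) := by
          simp_rw [Finset.mul_sum]
      _ = ∑ m, ∑ n, ∑ c, ∑ d, A a b c d * (eps4 a b m n * A m n c d) := mv22 _
      _ = ∑ m, ∑ n, eps4 a b m n * ∑ c, ∑ d, A a b c d * A m n c d := by
          refine Finset.sum_congr rfl fun m _ => Finset.sum_congr rfl fun n _ => ?_
          rw [Finset.mul_sum]
          refine Finset.sum_congr rfl fun c _ => ?_
          rw [Finset.mul_sum]
          exact Finset.sum_congr rfl fun d _ => by ring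
  rw [stepA]
  have hinner : ∀ a b m n : Fin 4, ∑ c, ∑ d, A a b c d * A m n c d
      = (∑ c, ∑ d, (∑ i, ∑ j, P a i * P b j * ((P * Mof A i j * P) c d))
          * (∑ k, ∑ l, P m k * P n l * ((P * Mof A k l * P) c d)))
        + ∑ c, ∑ d, (∑ i, ∑ j, Q a i * Q b j * ((Q * Mof A i j * Q) c d))
          * (∑ k, ∑ l, Q m k * Q n l * ((Q * Mof A k l * Q) c d)) := by
    intro a b m n
    have e : ∀ c d : Fin 4, A a b c d * A m n c d
        = (∑ i, ∑ j, P a i * P b j * ((P * Mof A i j * P) c d))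
            * (∑ k, ∑ l, P m k * P n l * ((P * Mof A k l * P) c d))
          + (∑ i, ∑ j, Q a i * Q b j * ((Q * Mof A i j * Q) c d))
            * (∑ k, ∑ l, Q m k * Q n l * ((Q * Mof A k l * Q) c d))
          + ((∑ i, ∑ j, P a i * P b j * ((P * Mof A i j * P) c d))
            * (∑ k, ∑ l, Q m k * Q n l * ((Q * Mof A k l * Q) c d))
          + (∑ i, ∑ j, Q a i * Q b j * ((Q * Mof A i j * Q) c d))
            * (∑ k, ∑ l, P m k * P n l * ((P * Mof A k l * P) c d))) := by
      intro c d
      rw [hfs a b c d, hfs m n c d]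
      ring
    simp_rw [e, Finset.sum_add_distrib]
    rw [crossCD A P Q hPQ hQt a b m n, crossCD' A P Q hQP hPt a b m n]
    ring
  simp_rw [hinner, mul_add, Finset.sum_add_distrib]
  rw [pieceSame P hdP (fun i j => P * Mof A i j * P),
    pieceSame Q hdQ (fun i j => Q * Mof A i j * Q)]
  ring

lemma phiPiece (B : Matrix (Fin 4) (Fin 4) ℝ) (hdB : B.det = 0)
    (hBs : ∀ u v, B u v = B v u) :
    ∑ a, ∑ b, ∑ c, ∑ d, eps4 a b c d
      * (∑ i, ∑ j, B a i * B b j * ((B * Mof A i j * B) c d)) = 0 := by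
  simp_rw [entry3, Finset.mul_sum]
  rw [mv44]
  refine Finset.sum_eq_zero fun i _ => Finset.sum_eq_zero fun j _ =>
    Finset.sum_eq_zero fun k _ => Finset.sum_eq_zero fun l _ => ?_
  have h : ∑ a, ∑ b, ∑ c, ∑ d, eps4 a b c d
        * (B a i * B b j * (B c k * (Mof A i j) k l * B l d))
      = A i j k l * ∑ a, ∑ b, ∑ c, ∑ d, eps4 a b c d
        * (B a i * B b j * (B c k * B d l)) := by
    simp_rw [Finset.mul_sum]
    refine Finset.sum_congr rfl fun a _ => Finset.sum_congr rfl fun b _ =>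
      Finset.sum_congr rfl fun c _ => Finset.sum_congr rfl fun d _ => ?_
    have hm : (Mof A i j) k l = A i j k l := rfl
    rw [hm, hBs l d]
    ring
  rw [h, eps_contract_col B hdB, mul_zero]

lemma Phi_zero (hApair : ∀ a b c d, A a b c d = A c d a b)
    (hAb : ∀ a b c d, A a b c d + A a c d b + A a d b c = 0)
    (hPs : ∀ u v, P u v = P v u) (hQs : ∀ u v, Q u v = Q v u)
    (h2 : ∀ a b, Mof A a b = P * Mof A a b * P + Q * Mof A a b * Q)
    (hPMQ : ∀ a b, P * Mof A a b * Q = 0)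
    (hQMP : ∀ a b, Q * Mof A a b * P = 0)
    (hdP : P.det = 0) (hdQ : Q.det = 0) :
    ∑ a, ∑ b, ∑ c, ∑ d, eps4 a b c d * A a b c d = 0 := by
  have hfs := fullsplit A P Q hApair hAb hPs hQs h2 hPMQ hQMP
  have e : ∀ a b c d : Fin 4, eps4 a b c d * A a b c d
      = eps4 a b c d * (∑ i, ∑ j, P a i * P b j * ((P * Mof A i j * P) c d))
        + eps4 a b c d * (∑ i, ∑ j, Q a i * Q b j * ((Q * Mof A i j * Q) c d)) := by
    intro a b c d
    rw [hfs a b c d]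
    ring
  simp_rw [e, Finset.sum_add_distrib]
  rw [phiPiece A P hdP hPs, phiPiece A Q hdQ hQs]
  ring

lemma LAG (hApair : ∀ a b c d, A a b c d = A c d a b)
    (hAskew : ∀ a b c d, A a b c d = -A b a c d)
    (hAb : ∀ a b c d, A a b c d + A a c d b + A a d b c = 0)
    (hPs : ∀ u v, P u v = P v u) (hQs : ∀ u v, Q u v = Q v u)
    (h2 : ∀ a b, Mof A a b = P * Mof A a b * P + Q * Mof A a b * Q)
    (hPMQ : ∀ a b, P * Mof A a b * Q = 0)
    (hQMP : ∀ a b, Q * Mof A a b * P = 0)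
    (hdP : P.det = 0) (hdQ : Q.det = 0) :
    ∑ a, ∑ b, ∑ c, ∑ d, (A a b c d
      * ∑ m, ∑ n, eps4 a b m n * (kdelta m c * kdelta n d - kdelta m d * kdelta n c)) = 0 := by
  have phi := Phi_zero A P Q hApair hAb hPs hQs h2 hPMQ hQMP hdP hdQ
  simp_rw [hcol, mul_sub, Finset.sum_sub_distrib]
  have h1 : ∑ a, ∑ b, ∑ c, ∑ d, A a b c d * eps4 a b c d = 0 := by
    refine Eq.trans ?_ phi
    exact Finset.sum_congr rfl fun a _ => Finset.sum_congr rfl fun b _ =>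
      Finset.sum_congr rfl fun c _ => Finset.sum_congr rfl fun d _ => mul_comm _ _
  have h2' : ∑ a, ∑ b, ∑ c, ∑ d, A a b c d * eps4 a b d c = 0 := by
    have hsk2 : ∀ a b c d : Fin 4, A a b d c = -A a b c d := by
      intro a b c d
      rw [hApair a b d c, hAskew d c a b, hApair c d a b]
    have swap : ∑ a, ∑ b, ∑ c, ∑ d, A a b c d * eps4 a b d c
        = ∑ a, ∑ b, ∑ c, ∑ d, A a b d c * eps4 a b c d := by
      exact Finset.sum_congr rfl fun a _ => Finset.sum_congr rfl fun b _ =>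
        Finset.sum_comm
    rw [swap]
    have neg : ∑ a, ∑ b, ∑ c, ∑ d, A a b d c * eps4 a b c d
        = -∑ a, ∑ b, ∑ c, ∑ d, eps4 a b c d * A a b c d := by
      simp_rw [← Finset.sum_neg_distrib]
      refine Finset.sum_congr rfl fun a _ => Finset.sum_congr rfl fun b _ =>
        Finset.sum_congr rfl fun c _ => Finset.sum_congr rfl fun d _ => ?_
      rw [hsk2 a b c d]; ring
    rw [neg, phi, neg_zero]
  rw [h1, h2', sub_zero]

lemma LGA (hApair : ∀ a b c d, A a b c d = A c d a b)
    (hAskew : ∀ a b c d, A a b c d = -A b a c d)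
    (hAb : ∀ a b c d, A a b c d + A a c d b + A a d b c = 0)
    (hPs : ∀ u v, P u v = P v u) (hQs : ∀ u v, Q u v = Q v u)
    (h2 : ∀ a b, Mof A a b = P * Mof A a b * P + Q * Mof A a b * Q)
    (hPMQ : ∀ a b, P * Mof A a b * Q = 0)
    (hQMP : ∀ a b, Q * Mof A a b * P = 0)
    (hdP : P.det = 0) (hdQ : Q.det = 0) :
    ∑ a, ∑ b, ∑ c, ∑ d, ((kdelta a c * kdelta b d - kdelta a d * kdelta b c)
      * ∑ m, ∑ n, eps4 a b m n * A m n c d) = 0 := by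
  have phi := Phi_zero A P Q hApair hAb hPs hQs h2 hPMQ hQMP hdP hdQ
  have k1 : ∑ a, ∑ b, ∑ m, ∑ n, eps4 a b m n * A m n a b = 0 := by
    refine Eq.trans ?_ phi
    refine Finset.sum_congr rfl fun a _ => Finset.sum_congr rfl fun b _ =>
      Finset.sum_congr rfl fun m _ => Finset.sum_congr rfl fun n _ => ?_
    rw [hApair m n a b]
  have k2 : ∑ a, ∑ b, ∑ m, ∑ n, eps4 a b m n * A m n b a = 0 := by
    have e : ∑ a, ∑ b, ∑ m, ∑ n, eps4 a b m n * A m n b a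
        = -∑ a, ∑ b, ∑ m, ∑ n, eps4 a b m n * A a b m n := by
      simp_rw [← Finset.sum_neg_distrib]
      refine Finset.sum_congr rfl fun a _ => Finset.sum_congr rfl fun b _ =>
        Finset.sum_congr rfl fun m _ => Finset.sum_congr rfl fun n _ => ?_
      rw [hApair m n b a, hAskew b a m n]; ring
    rw [e, phi, neg_zero]
  have dcol : ∀ (f : Fin 4 → ℝ) (bb : Fin 4), ∑ d, kdelta bb d * f d = f bb := by
    intro f bb
    simp [kdelta, ite_mul, one_mul, zero_mul, Finset.sum_ite_eq, Finset.mem_univ]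
  have esplit : ∀ a b c d : Fin 4, (kdelta a c * kdelta b d - kdelta a d * kdelta b c)
      * ∑ m, ∑ n, eps4 a b m n * A m n c d
      = kdelta a c * (kdelta b d * ∑ m, ∑ n, eps4 a b m n * A m n c d)
        - kdelta b c * (kdelta a d * ∑ m, ∑ n, eps4 a b m n * A m n c d) := by
    intro a b c d; ring
  simp_rw [esplit, Finset.sum_sub_distrib]
  have TA : ∑ a, ∑ b, ∑ c, ∑ d, kdelta a c * (kdelta b d * ∑ m, ∑ n, eps4 a b m n * A m n c d)
      = ∑ a, ∑ b, ∑ m, ∑ n, eps4 a b m n * A m n a b := by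
    refine Finset.sum_congr rfl fun a _ => Finset.sum_congr rfl fun b _ => ?_
    have inner : ∀ c : Fin 4, ∑ d, kdelta a c * (kdelta b d * ∑ m, ∑ n, eps4 a b m n * A m n c d)
        = kdelta a c * ∑ m, ∑ n, eps4 a b m n * A m n c b := by
      intro c
      rw [← Finset.mul_sum, dcol (fun d => ∑ m, ∑ n, eps4 a b m n * A m n c d) b]
    simp_rw [inner]
    exact dcol (fun c => ∑ m, ∑ n, eps4 a b m n * A m n c b) a
  have TB : ∑ a, ∑ b, ∑ c, ∑ d, kdelta b c * (kdelta a d * ∑ m, ∑ n, eps4 a b m n * A m n c d)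
      = ∑ a, ∑ b, ∑ m, ∑ n, eps4 a b m n * A m n b a := by
    refine Finset.sum_congr rfl fun a _ => Finset.sum_congr rfl fun b _ => ?_
    have inner : ∀ c : Fin 4, ∑ d, kdelta b c * (kdelta a d * ∑ m, ∑ n, eps4 a b m n * A m n c d)
        = kdelta b c * ∑ m, ∑ n, eps4 a b m n * A m n c a := by
      intro c
      rw [← Finset.mul_sum, dcol (fun d => ∑ m, ∑ n, eps4 a b m n * A m n c d) a]
    simp_rw [inner]
    exact dcol (fun c => ∑ m, ∑ n, eps4 a b m n * A m n c a) b
  rw [TA, TB, k1, k2, sub_zero]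

lemma master (hApair : ∀ a b c d, A a b c d = A c d a b)
    (hAskew : ∀ a b c d, A a b c d = -A b a c d)
    (hAb : ∀ a b c d, A a b c d + A a c d b + A a d b c = 0)
    (hPs : ∀ u v, P u v = P v u) (hQs : ∀ u v, Q u v = Q v u)
    (h2 : ∀ a b, Mof A a b = P * Mof A a b * P + Q * Mof A a b * Q)
    (hPMQ : ∀ a b, P * Mof A a b * Q = 0)
    (hQMP : ∀ a b, Q * Mof A a b * P = 0)
    (hPQ : P * Q = 0) (hQP : Q * P = 0)
    (hPt : Pᵀ = P) (hQt : Qᵀ = Q)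
    (hdP : P.det = 0) (hdQ : Q.det = 0) (c0 : ℝ) :
    ∑ a, ∑ b, ∑ c, ∑ d, ((A a b c d
        - c0 * (kdelta a c * kdelta b d - kdelta a d * kdelta b c))
      * (1 / 2 * ∑ m, ∑ n, eps4 a b m n * (A m n c d
        - c0 * (kdelta m c * kdelta n d - kdelta m d * kdelta n c)))) = 0 := by
  have hsplit : ∀ a b c d : Fin 4,
      ∑ m, ∑ n, eps4 a b m n * (A m n c d
        - c0 * (kdelta m c * kdelta n d - kdelta m d * kdelta n c))
      = (∑ m, ∑ n, eps4 a b m n * A m n c d)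
        - c0 * ∑ m, ∑ n, eps4 a b m n
            * (kdelta m c * kdelta n d - kdelta m d * kdelta n c) := by
    intro a b c d
    rw [Finset.mul_sum, ← Finset.sum_sub_distrib]
    refine Finset.sum_congr rfl fun m _ => ?_
    rw [Finset.mul_sum, ← Finset.sum_sub_distrib]
    refine Finset.sum_congr rfl fun n _ => ?_
    ring
  have hterm : ∀ a b c d : Fin 4, (A a b c d
        - c0 * (kdelta a c * kdelta b d - kdelta a d * kdelta b c))
      * (1 / 2 * ∑ m, ∑ n, eps4 a b m n * (A m n c d
        - c0 * (kdelta m c * kdelta n d - kdelta m d * kdelta n c)))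
      = 1 / 2 * (A a b c d * ∑ m, ∑ n, eps4 a b m n * A m n c d)
        - c0 / 2 * (A a b c d * ∑ m, ∑ n, eps4 a b m n
            * (kdelta m c * kdelta n d - kdelta m d * kdelta n c))
        - c0 / 2 * ((kdelta a c * kdelta b d - kdelta a d * kdelta b c)
            * ∑ m, ∑ n, eps4 a b m n * A m n c d)
        + c0 ^ 2 / 2 * ((kdelta a c * kdelta b d - kdelta a d * kdelta b c)
            * ∑ m, ∑ n, eps4 a b m n
              * (kdelta m c * kdelta n d - kdelta m d * kdelta n c)) := by
    intro a b c d
    rw [hsplit a b c d]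
    ring
  simp_rw [hterm, Finset.sum_add_distrib, Finset.sum_sub_distrib, ← Finset.mul_sum]
  rw [Ekey_zero A P Q hApair hAb hPs hQs h2 hPMQ hQMP hPQ hQP hPt hQt hdP hdQ,
    LAG A P Q hApair hAskew hAb hPs hQs h2 hPMQ hQMP hdP hdQ,
    LGA A P Q hApair hAskew hAb hPs hQs h2 hPMQ hQMP hdP hdQ, LGG]
  ring

end Core



section Pointwise

lemma pointwise_zero (R : M → Fin 4 → Fin 4 → Fin 4 → Fin 4 → ℝ)
    (hskew : ∀ x a b c d, R x a b c d = -R x b a c d)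
    (hpair : ∀ x a b c d, R x a b c d = R x c d a b)
    (hbianchi : ∀ x a b c d, R x a b c d + R x a c d b + R x a d b c = 0)
    (lam : ℝ) (heinstein : ∀ x i j, ricciOf R x i j = lam * kdelta i j)
    (j : M → Matrix (Fin 4) (Fin 4) ℝ)
    (hj2 : ∀ x, j x * j x = 1) (hjsymm : ∀ x, (j x)ᵀ = j x)
    (hcomm : ∀ x a b, curvOp R x a b * j x = j x * curvOp R x a b)
    (x : M) (hne1 : j x ≠ 1) (hneN1 : j x ≠ -1) :
    weylPartNormSq R 1 x - weylPartNormSq R (-1) x = 0 := by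
  classical
  set J := j x with hJdef
  set P : Matrix (Fin 4) (Fin 4) ℝ := (1/2 : ℝ) • (1 + J) with hPdef
  set Q : Matrix (Fin 4) (Fin 4) ℝ := (1/2 : ℝ) • (1 - J) with hQdef
  have hJJ : J * J = 1 := hj2 x
  have hPt : Pᵀ = P := by
    rw [hPdef, Matrix.transpose_smul, Matrix.transpose_add, Matrix.transpose_one, hjsymm x]
  have hQt : Qᵀ = Q := by
    rw [hQdef, Matrix.transpose_smul, Matrix.transpose_sub, Matrix.transpose_one, hjsymm x]
  have hPs : ∀ u v, P u v = P v u := by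
    intro u v
    conv_lhs => rw [← hPt]
    simp [Matrix.transpose_apply]
  have hQs : ∀ u v, Q u v = Q v u := by
    intro u v
    conv_lhs => rw [← hQt]
    simp [Matrix.transpose_apply]
  have hPQ : P * Q = 0 := by
    have h0 : (1 + J) * (1 - J) = 0 := by
      rw [add_mul, one_mul, mul_sub, mul_one, hJJ]
      abel
    rw [hPdef, hQdef, Matrix.smul_mul, Matrix.mul_smul, h0, smul_zero, smul_zero]
  have hQP : Q * P = 0 := by
    have h0 : (1 - J) * (1 + J) = 0 := by
      rw [sub_mul, one_mul, mul_add, mul_one, hJJ]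
      abel
    rw [hPdef, hQdef, Matrix.smul_mul, Matrix.mul_smul, h0, smul_zero, smul_zero]
  have hPP : P * P = P := by
    have h0 : (1 + J) * (1 + J) = (2 : ℝ) • (1 + J) := by
      rw [add_mul, one_mul, mul_add, mul_one, hJJ, two_smul]
      abel
    rw [hPdef, Matrix.smul_mul, Matrix.mul_smul, h0, smul_smul, smul_smul]
    norm_num
  have hQQ : Q * Q = Q := by
    have h0 : (1 - J) * (1 - J) = (2 : ℝ) • (1 - J) := by
      rw [sub_mul, one_mul, mul_sub, mul_one, hJJ, two_smul]
      abel
    rw [hQdef, Matrix.smul_mul, Matrix.mul_smul, h0, smul_smul, smul_smul]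
    norm_num
  have hsum : P + Q = 1 := by
    rw [hPdef, hQdef, ← smul_add]
    have h0 : (1 + J) + (1 - J) = (2 : ℝ) • (1 : Matrix (Fin 4) (Fin 4) ℝ) := by
      rw [two_smul]; abel
    rw [h0, smul_smul]
    norm_num
  have hcM : ∀ a b, Mof (R x) a b * J = J * Mof (R x) a b := fun a b => hcomm x a b
  have hMP : ∀ a b, Mof (R x) a b * P = P * Mof (R x) a b := by
    intro a b
    rw [hPdef, Matrix.smul_mul, Matrix.mul_smul]
    congr 1
    rw [mul_add, add_mul, mul_one, one_mul, hcM a b]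
  have hMQ : ∀ a b, Mof (R x) a b * Q = Q * Mof (R x) a b := by
    intro a b
    rw [hQdef, Matrix.smul_mul, Matrix.mul_smul]
    congr 1
    rw [mul_sub, sub_mul, mul_one, one_mul, hcM a b]
  have hPMQ : ∀ a b, P * Mof (R x) a b * Q = 0 := by
    intro a b
    rw [← hMP a b, Matrix.mul_assoc, hPQ, Matrix.mul_zero]
  have hQMP : ∀ a b, Q * Mof (R x) a b * P = 0 := by
    intro a b
    rw [← hMQ a b, Matrix.mul_assoc, hQP, Matrix.mul_zero]
  have h2 : ∀ a b, Mof (R x) a b = P * Mof (R x) a b * P + Q * Mof (R x) a b * Q := by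
    intro a b
    have e1 : P * Mof (R x) a b * P = P * Mof (R x) a b := by
      rw [Matrix.mul_assoc, hMP a b, ← Matrix.mul_assoc, hPP]
    have e2 : Q * Mof (R x) a b * Q = Q * Mof (R x) a b := by
      rw [Matrix.mul_assoc, hMQ a b, ← Matrix.mul_assoc, hQQ]
    rw [e1, e2, ← add_mul, hsum, one_mul]
  have hdP : P.det = 0 := by
    by_contra hd
    have hUnit : IsUnit P := (Matrix.isUnit_iff_isUnit_det P).mpr (isUnit_iff_ne_zero.mpr hd)
    obtain ⟨u, hu⟩ := hUnit
    have hinv : P * (↑u⁻¹ : Matrix (Fin 4) (Fin 4) ℝ) = 1 := by rw [← hu]; exact u.mul_inv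
    have hP1 : P = 1 := by
      calc P = P * 1 := (mul_one P).symm
        _ = P * (P * (↑u⁻¹ : Matrix (Fin 4) (Fin 4) ℝ)) := by rw [hinv]
        _ = (P * P) * (↑u⁻¹ : Matrix (Fin 4) (Fin 4) ℝ) := (Matrix.mul_assoc _ _ _).symm
        _ = P * (↑u⁻¹ : Matrix (Fin 4) (Fin 4) ℝ) := by rw [hPP]
        _ = 1 := hinv
    apply hne1
    have h3 : (2 : ℝ) • P = (2 : ℝ) • (1 : Matrix (Fin 4) (Fin 4) ℝ) := by rw [hP1]
    rw [hPdef, smul_smul] at h3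
    norm_num at h3
    have h4 : (1 : Matrix (Fin 4) (Fin 4) ℝ) + J = 1 + 1 := by
      rw [h3, two_smul]
    exact add_left_cancel h4
  have hdQ : Q.det = 0 := by
    by_contra hd
    have hUnit : IsUnit Q := (Matrix.isUnit_iff_isUnit_det Q).mpr (isUnit_iff_ne_zero.mpr hd)
    obtain ⟨u, hu⟩ := hUnit
    have hinv : Q * (↑u⁻¹ : Matrix (Fin 4) (Fin 4) ℝ) = 1 := by rw [← hu]; exact u.mul_inv
    have hQ1 : Q = 1 := by
      calc Q = Q * 1 := (mul_one Q).symm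
        _ = Q * (Q * (↑u⁻¹ : Matrix (Fin 4) (Fin 4) ℝ)) := by rw [hinv]
        _ = (Q * Q) * (↑u⁻¹ : Matrix (Fin 4) (Fin 4) ℝ) := (Matrix.mul_assoc _ _ _).symm
        _ = Q * (↑u⁻¹ : Matrix (Fin 4) (Fin 4) ℝ) := by rw [hQQ]
        _ = 1 := hinv
    apply hneN1
    have h3 : (2 : ℝ) • Q = (2 : ℝ) • (1 : Matrix (Fin 4) (Fin 4) ℝ) := by rw [hQ1]
    rw [hQdef, smul_smul] at h3
    norm_num at h3
    have h4 : (1 : Matrix (Fin 4) (Fin 4) ℝ) - J = 1 + 1 := by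
      rw [h3, two_smul]
    have h5 : J = -1 := by
      have := congrArg (fun X => X - (1 : Matrix (Fin 4) (Fin 4) ℝ) - J) h4
      simp at this
      linear_combination (norm := abel) -this
    exact h5
  -- curvature reduction
  have hsc : scalarOf R x = 4 * lam := by
    simp [scalarOf, heinstein, Fin.sum_univ_four, kdelta]
  have hW : ∀ a b c d : Fin 4, weylOf R x a b c d
      = R x a b c d - lam / 3 * (kdelta a c * kdelta b d - kdelta a d * kdelta b c) := by
    intro a b c d
    simp only [weylOf, heinstein, hsc]
    ring
  have hterm : ∀ w h : ℝ, ((w + 1 * h) / 2) ^ 2 - ((w + (-1) * h) / 2) ^ 2 = w * h := by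
    intro w h; ring
  simp only [weylPartNormSq]
  simp only [← Finset.sum_sub_distrib]
  simp_rw [hterm]
  simp only [hodgeFst]
  simp_rw [hW]
  exact master (R x) P Q (hpair x) (hskew x) (hbianchi x) hPs hQs h2 hPMQ hQMP hPQ hQP
    hPt hQt hdP hdQ (lam / 3)

end Pointwise


/-- **(Guilfoyle–Georgiou.)** A closed Riemannian Einstein 4-manifold admitting a parallel
isometric paracomplex structure has vanishing signature `τ(M) = 0`.  Here the curvature
of the Einstein metric is given in orthonormal frames by the tensor field `R` (with the
usual symmetries), the parallel isometric paracomplex structure `j` commutes with all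
curvature operators (the infinitesimal consequence of `∇j = 0`), and the signature is
computed by the Hirzebruch formula `τ = (1/48π²)∫_M (|W⁺|² − |W⁻|²) dV`. -/
theorem signature_zero_of_einstein_parallel_paracomplex
    [MeasurableSpace M] (μ : Measure M) [IsFiniteMeasure μ]
    (R : M → Fin 4 → Fin 4 → Fin 4 → Fin 4 → ℝ)
    (hskew : ∀ x a b c d, R x a b c d = -R x b a c d)
    (hpair : ∀ x a b c d, R x a b c d = R x c d a b)
    (hbianchi : ∀ x a b c d, R x a b c d + R x a c d b + R x a d b c = 0)
    (lam : ℝ) (heinstein : ∀ x i j, ricciOf R x i j = lam * kdelta i j)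
    (j : M → Matrix (Fin 4) (Fin 4) ℝ)
    (hj2 : ∀ x, j x * j x = 1) (hjsymm : ∀ x, (j x)ᵀ = j x)
    (hrank : ∀ x, Module.finrank ℝ
        (Module.End.eigenspace (Matrix.toLin' (j x)) 1) = 2)
    (hcomm : ∀ x a b, curvOp R x a b * j x = j x * curvOp R x a b)
    (τ : ℤ)
    (hhirzebruch : (τ : ℝ) = (48 * Real.pi ^ 2)⁻¹ *
      ∫ x, (weylPartNormSq R 1 x - weylPartNormSq R (-1) x) ∂μ) :
    τ = 0 := by
  have hpt : ∀ x, weylPartNormSq R 1 x - weylPartNormSq R (-1) x = 0 := by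
    intro x
    have hne1 : j x ≠ 1 := by
      intro h
      have hr := hrank x
      rw [h, Matrix.toLin'_one] at hr
      have he : Module.End.eigenspace (LinearMap.id : (Fin 4 → ℝ) →ₗ[ℝ] (Fin 4 → ℝ)) 1 = ⊤ := by
        ext v
        simp [Module.End.mem_eigenspace_iff]
      rw [he, finrank_top, Module.finrank_fin_fun ℝ] at hr
      norm_num at hr
    have hneN1 : j x ≠ -1 := by
      intro h
      have hr := hrank x
      rw [h] at hr
      have he : Module.End.eigenspace (Matrix.toLin' (-1 : Matrix (Fin 4) (Fin 4) ℝ)) 1 = ⊥ := by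
        ext v
        simp only [Module.End.mem_eigenspace_iff, Matrix.toLin'_apply, Matrix.neg_mulVec,
          Matrix.one_mulVec, one_smul, Submodule.mem_bot]
        constructor
        · intro hv
          funext i
          have := congrFun hv i
          simp only [Pi.neg_apply] at this
          have : v i = 0 := by linarith
          simpa using this
        · intro hv
          rw [hv]
          simp
      rw [he, finrank_bot] at hr
      norm_num at hr
    exact pointwise_zero R hskew hpair hbianchi lam heinstein j hj2 hjsymm hcomm x hne1 hneN1
  have hint : ∫ x, (weylPartNormSq R 1 x - weylPartNormSq R (-1) x) ∂μ = 0 := by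
    simp only [hpt]
    exact MeasureTheory.integral_zero _ _
  rw [hint, mul_zero] at hhirzebruch
  exact_mod_cast hhirzebruch
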